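/- For a positive function φ on ℝ_q⁺ with ∫₀^∞ φ(x) x^{2v+1} d_q x = 1 and finite a-th moment M_a(φ)^a = ∫₀^∞ |x|^a φ(x) x^{2v+1} d_q x, the entropy E(φ) = ∫₀^∞ φ(x) log φ(x) x^{2v+1} d_q x satisfies -E(φ) ≤ log k_c + c^a M_a(φ)^a for every c ∈ ℝ_q⁺, where k_c = σ_a / c^{2v+2} and σ_a = ∫₀^∞ exp(-|x|^a) x^{2v+1} d_q x. -/

import Mathlib

open scoped BigOperators
open Real Filter

/-- Finite q-Pochhammer symbol (a;q)_n. -/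
noncomputable def qPoch (a q : ℝ) (n : ℕ) : ℝ := ∏ k ∈ Finset.range n, (1 - a * q ^ k)

/-- Infinite q-Pochhammer symbol (a;q)_∞. -/
noncomputable def qPochInf (a q : ℝ) : ℝ := ∏' n : ℕ, (1 - a * q ^ n)

/-- Normalized Hahn-Exton q-Bessel function j_v(x, q²). -/
noncomputable def qBesselJ (q v x : ℝ) : ℝ :=
  ∑' n : ℕ, (-1 : ℝ) ^ n * q ^ (n * (n + 1)) /
    (qPoch (q ^ (2 * v + 2)) (q ^ 2) n * qPoch (q ^ 2) (q ^ 2) n) * x ^ (2 * n)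

/-- The q-Jackson integral ∫₀^∞ f(t) d_q t = (1-q) Σ_{n∈ℤ} qⁿ f(qⁿ). -/
noncomputable def qInt (q : ℝ) (f : ℝ → ℝ) : ℝ := (1 - q) * ∑' n : ℤ, q ^ n * f (q ^ n)

/-- The constant c_{q,v}. -/
noncomputable def qBesselC (q v : ℝ) : ℝ :=
  (1 / (1 - q)) * qPochInf (q ^ (2 * v + 2)) (q ^ 2) / qPochInf (q ^ 2) (q ^ 2)

/-- The q-Bessel Fourier transform F_{q,v}. -/
noncomputable def qFourier (q v : ℝ) (f : ℝ → ℝ) (x : ℝ) : ℝ :=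
  qBesselC q v * qInt q (fun t => f t * qBesselJ q v (x * t) * t ^ (2 * v + 1))

/-- Membership in L^p_{q,v}: even on ℝ_q and p-th power summable on the q-lattice. -/
def qMemLp (q v p : ℝ) (f : ℝ → ℝ) : Prop :=
  (∀ x, f (-x) = f x) ∧
    Summable (fun n : ℤ => q ^ n * (|f (q ^ n)| ^ p * ((q : ℝ) ^ n) ^ (2 * v + 1)))

/-- The norm ‖f‖_{q,p,v}. -/
noncomputable def qNorm (q v p : ℝ) (f : ℝ → ℝ) : ℝ :=
  (qInt q (fun x => |f x| ^ p * x ^ (2 * v + 1))) ^ (1 / p)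

/-- The q-translation operator T^v_{q,x}. -/
noncomputable def qTrans (q v x : ℝ) (f : ℝ → ℝ) (y : ℝ) : ℝ :=
  qBesselC q v * qInt q (fun t =>
    qFourier q v f t * qBesselJ q v (y * t) * qBesselJ q v (x * t) * t ^ (2 * v + 1))

/-- The q-convolution product f *_q g. -/
noncomputable def qConv (q v : ℝ) (f g : ℝ → ℝ) (x : ℝ) : ℝ :=
  qBesselC q v * qInt q (fun y => qTrans q v x f y * g y * y ^ (2 * v + 1))

/-- q belongs to the positivity domain Q_v: the q-translation is positive. -/
def qPosDomain (q v : ℝ) : Prop :=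
  ∀ (f : ℝ → ℝ) (x : ℝ), (∀ y, 0 ≤ f y) → ∀ y, 0 ≤ qTrans q v x f y

/-- The constant B_{q,v} of the Hausdorff-Young inequality. -/
noncomputable def qB (q v : ℝ) : ℝ :=
  (1 / (1 - q)) * (qPochInf (-(q ^ 2)) (q ^ 2) * qPochInf (-(q ^ (2 * v + 2))) (q ^ 2)) /
    qPochInf (q ^ 2) (q ^ 2)

/-- σ_a = ∫₀^∞ exp(-|x|^a) x^{2v+1} d_q x. -/
noncomputable def qSigma (q v a : ℝ) : ℝ :=
  qInt q (fun x => Real.exp (-(|x| ^ a)) * x ^ (2 * v + 1))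

/-- The entropy E(φ) = ∫₀^∞ φ log φ · x^{2v+1} d_q x. -/
noncomputable def qEntropy (q v : ℝ) (φ : ℝ → ℝ) : ℝ :=
  qInt q (fun x => φ x * Real.log (φ x) * x ^ (2 * v + 1))

/-- The q-exponential e(z,q) = 1/(z;q)_∞. -/
noncomputable def qExpF (z q : ℝ) : ℝ := (qPochInf z q)⁻¹

/-- The q-Gauss kernel G^v(x, t², q²). -/
noncomputable def qGauss (q v x t : ℝ) : ℝ :=
  (qPochInf (-(q ^ (2 * v + 2)) * t ^ 2) (q ^ 2) * qPochInf (-(q ^ (-(2 * v))) / t ^ 2) (q ^ 2)) /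
    (qPochInf (-(t ^ 2)) (q ^ 2) * qPochInf (-(q ^ 2) / t ^ 2) (q ^ 2)) *
    qExpF (-(q ^ (-(2 * v))) / t ^ 2 * x ^ 2) (q ^ 2)

/-- The q-Bessel operator Δ_{q,v}. -/
noncomputable def qBesselOp (q v : ℝ) (f : ℝ → ℝ) (x : ℝ) : ℝ :=
  (1 / x ^ 2) * (f (q⁻¹ * x) - (1 + q ^ (2 * v)) * f x + q ^ (2 * v) * f (q * x))

/-!
Gibbs' inequality `∫ φ log ψ ≤ ∫ φ log φ`, for the probability density
`ψ x = exp (-(c |x|) ^ a) / k_c` with respect to `x ^ (2v+1) d_q x`, gives the bound, because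
`∫ φ log ψ = -log k_c - c ^ a M_a(φ) ^ a`. That `ψ` has total mass `1` is where `c ∈ ℝ_q⁺` is
needed: dilation by `c` permutes the lattice `q ^ ℤ`, so it only rescales the Jackson integral.
-/

def QIntegrable (q : ℝ) (f : ℝ → ℝ) : Prop :=
  Summable fun n : ℤ => q ^ n * f (q ^ n)

section JacksonIntegral

variable {q : ℝ} {f g : ℝ → ℝ}

theorem qInt_congr (h : ∀ n : ℤ, f (q ^ n) = g (q ^ n)) : qInt q f = qInt q g := by
  simp only [qInt, h]

theorem QIntegrable.congr (hf : QIntegrable q f) (h : ∀ n : ℤ, f (q ^ n) = g (q ^ n)) :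
    QIntegrable q g := by
  simpa only [QIntegrable, h] using hf

theorem QIntegrable.const_mul (hf : QIntegrable q f) (r : ℝ) :
    QIntegrable q fun x => r * f x :=
  (Summable.mul_left r hf).congr fun n => by ring

theorem QIntegrable.sub (hf : QIntegrable q f) (hg : QIntegrable q g) :
    QIntegrable q fun x => f x - g x :=
  (Summable.sub hf hg).congr fun n => by ring

theorem qInt_const_mul (r : ℝ) (f : ℝ → ℝ) : qInt q (fun x => r * f x) = r * qInt q f := by
  simp only [qInt, mul_left_comm _ r, tsum_mul_left]

theorem qInt_sub (hf : QIntegrable q f) (hg : QIntegrable q g) :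
    qInt q (fun x => f x - g x) = qInt q f - qInt q g := by
  simp only [qInt, mul_sub, hf.tsum_sub hg]

theorem qInt_mono (hq0 : 0 < q) (hq1 : q ≤ 1) (hf : QIntegrable q f) (hg : QIntegrable q g)
    (h : ∀ n : ℤ, f (q ^ n) ≤ g (q ^ n)) : qInt q f ≤ qInt q g :=
  mul_le_mul_of_nonneg_left
    (hf.tsum_le_tsum (fun n => mul_le_mul_of_nonneg_left (h n) (zpow_pos hq0 n).le) hg)
    (by linarith)

theorem qInt_pos (hq0 : 0 < q) (hq1 : q < 1) (hf : QIntegrable q f)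
    (h : ∀ n : ℤ, 0 < f (q ^ n)) : 0 < qInt q f :=
  mul_pos (by linarith) <|
    hf.tsum_pos (fun n => (mul_pos (zpow_pos hq0 n) (h n)).le) 0 (mul_pos (zpow_pos hq0 0) (h 0))

theorem zpow_mul_comp_zpow_mul (hq : q ≠ 0) (m n : ℤ) (f : ℝ → ℝ) :
    q ^ n * f (q ^ m * q ^ n) = (q ^ m)⁻¹ * (q ^ (n + m) * f (q ^ (n + m))) := by
  rw [zpow_add₀ hq, mul_comm (q ^ n) (q ^ m), mul_assoc,
    inv_mul_cancel_left₀ (zpow_ne_zero m hq)]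

theorem qInt_comp_zpow_mul (hq : q ≠ 0) (m : ℤ) (f : ℝ → ℝ) :
    qInt q (fun x => f (q ^ m * x)) = (q ^ m)⁻¹ * qInt q f := by
  have hshift : ∑' n : ℤ, q ^ (n + m) * f (q ^ (n + m)) = ∑' n : ℤ, q ^ n * f (q ^ n) :=
    (Equiv.addRight m).tsum_eq fun n => q ^ n * f (q ^ n)
  rw [qInt, qInt, tsum_congr (zpow_mul_comp_zpow_mul hq m · f), tsum_mul_left, hshift]
  ring

theorem QIntegrable.comp_zpow_mul (hq : q ≠ 0) (hf : QIntegrable q f) (m : ℤ) :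
    QIntegrable q fun x => f (q ^ m * x) :=
  (Summable.mul_left (q ^ m)⁻¹ ((Equiv.addRight m).summable_iff.mpr hf)).congr
    fun n => (zpow_mul_comp_zpow_mul hq m n f).symm

end JacksonIntegral

/-- The pointwise Gibbs inequality, from `log t ≤ t - 1` at `t = r / p`. -/
theorem mul_log_sub_mul_log_le {p r : ℝ} (hp : 0 < p) (hr : 0 < r) :
    p * log r - p * log p ≤ r - p := by
  have h := mul_le_mul_of_nonneg_left (log_le_sub_one_of_pos (div_pos hr hp)) hp.le
  rwa [log_div hr.ne' hp.ne', mul_sub, mul_sub, mul_div_cancel₀ _ hp.ne', mul_one] at h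

theorem qInt_mul_log_sub_le {q : ℝ} (hq0 : 0 < q) (hq1 : q ≤ 1) {w φ ψ : ℝ → ℝ}
    (hw : ∀ n : ℤ, 0 ≤ w (q ^ n)) (hφ : ∀ n : ℤ, 0 < φ (q ^ n)) (hψ : ∀ n : ℤ, 0 < ψ (q ^ n))
    (hφw : QIntegrable q fun x => φ x * w x) (hψw : QIntegrable q fun x => ψ x * w x)
    (hφφ : QIntegrable q fun x => φ x * log (φ x) * w x)
    (hφψ : QIntegrable q fun x => φ x * log (ψ x) * w x) :
    qInt q (fun x => φ x * log (ψ x) * w x) - qInt q (fun x => φ x * log (φ x) * w x)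
      ≤ qInt q (fun x => ψ x * w x) - qInt q (fun x => φ x * w x) := by
  rw [← qInt_sub hφψ hφφ, ← qInt_sub hψw hφw]
  refine qInt_mono hq0 hq1 (hφψ.sub hφφ) (hψw.sub hφw) fun n => ?_
  rw [← sub_mul, ← sub_mul]
  exact mul_le_mul_of_nonneg_right (mul_log_sub_mul_log_le (hφ n) (hψ n)) (hw n)

section ScaledGauss

variable {q : ℝ} (v a : ℝ)

theorem exp_neg_rpow_mul_rpow_eq {c x : ℝ} (hc : 0 < c) (hx : 0 ≤ x) :
    exp (-(c ^ a * |x| ^ a)) * x ^ (2 * v + 1)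
      = (c ^ (2 * v + 1))⁻¹ * (exp (-(|c * x| ^ a)) * (c * x) ^ (2 * v + 1)) := by
  rw [abs_mul, abs_of_pos hc, mul_rpow hc.le (abs_nonneg x), mul_rpow hc.le hx]
  field_simp [(rpow_pos_of_pos hc (2 * v + 1)).ne']

theorem QIntegrable.exp_neg_scaled_rpow (hq : 0 < q) (m : ℤ)
    (hσ : QIntegrable q fun x => exp (-(|x| ^ a)) * x ^ (2 * v + 1)) :
    QIntegrable q fun x => exp (-((q ^ m) ^ a * |x| ^ a)) * x ^ (2 * v + 1) :=
  ((hσ.comp_zpow_mul hq.ne' m).const_mul _).congr fun n =>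
    (exp_neg_rpow_mul_rpow_eq v a (zpow_pos hq m) (zpow_pos hq n).le).symm

theorem qInt_exp_neg_scaled_rpow (hq : 0 < q) (m : ℤ) :
    qInt q (fun x => exp (-((q ^ m) ^ a * |x| ^ a)) * x ^ (2 * v + 1))
      = qSigma q v a / (q ^ m) ^ (2 * v + 2) := by
  have hc := zpow_pos hq m
  rw [qInt_congr (g := fun x => ((q ^ m) ^ (2 * v + 1))⁻¹ *
      (exp (-(|q ^ m * x| ^ a)) * (q ^ m * x) ^ (2 * v + 1)))
      fun n => exp_neg_rpow_mul_rpow_eq v a hc (zpow_pos hq n).le, qInt_const_mul,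
    qInt_comp_zpow_mul hq.ne' m (fun x => exp (-(|x| ^ a)) * x ^ (2 * v + 1)),
    show 2 * v + 2 = (2 * v + 1) + 1 by ring, rpow_add_one hc.ne' (2 * v + 1), qSigma,
    div_eq_mul_inv, mul_inv]
  ring

end ScaledGauss

theorem qEntropy_moment_bound_general (q v a : ℝ) (hq0 : 0 < q) (hq1 : q < 1)
    (φ : ℝ → ℝ) (hφpos : ∀ n : ℤ, 0 < φ (q ^ n))
    (hφ1 : qInt q (fun x => φ x * x ^ (2 * v + 1)) = 1)
    (hφsum : Summable (fun n : ℤ => q ^ n * (φ (q ^ n) * ((q : ℝ) ^ n) ^ (2 * v + 1))))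
    (hM : Summable (fun n : ℤ =>
      q ^ n * (|(q : ℝ) ^ n| ^ a * φ (q ^ n) * ((q : ℝ) ^ n) ^ (2 * v + 1))))
    (hE : Summable (fun n : ℤ =>
      q ^ n * (φ (q ^ n) * Real.log (φ (q ^ n)) * ((q : ℝ) ^ n) ^ (2 * v + 1))))
    (hσ : Summable (fun n : ℤ =>
      q ^ n * (Real.exp (-(|(q : ℝ) ^ n| ^ a)) * ((q : ℝ) ^ n) ^ (2 * v + 1))))
    (c : ℝ) (hc : ∃ m : ℤ, c = q ^ m) :
    -qEntropy q v φ ≤ Real.log (qSigma q v a / c ^ (2 * v + 2)) +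
      c ^ a * qInt q (fun x => |x| ^ a * φ x * x ^ (2 * v + 1)) := by
  obtain ⟨m, rfl⟩ := hc
  have hφw : QIntegrable q fun x => φ x * x ^ (2 * v + 1) := hφsum
  have hMw : QIntegrable q fun x => |x| ^ a * φ x * x ^ (2 * v + 1) := hM
  have hEw : QIntegrable q fun x => φ x * log (φ x) * x ^ (2 * v + 1) := hE
  have hσw : QIntegrable q fun x => exp (-(|x| ^ a)) * x ^ (2 * v + 1) := hσ
  have hk : 0 < qSigma q v a / (q ^ m) ^ (2 * v + 2) := by
    rw [← qInt_exp_neg_scaled_rpow v a hq0 m]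
    exact qInt_pos hq0 hq1 (.exp_neg_scaled_rpow v a hq0 m hσw) fun n => by positivity
  set k := qSigma q v a / (q ^ m) ^ (2 * v + 2)
  set ψ : ℝ → ℝ := fun x => exp (-((q ^ m) ^ a * |x| ^ a)) / k
  have hψw : QIntegrable q fun x => ψ x * x ^ (2 * v + 1) :=
    ((QIntegrable.exp_neg_scaled_rpow v a hq0 m hσw).const_mul k⁻¹).congr fun n => by ring
  have hψ1 : qInt q (fun x => ψ x * x ^ (2 * v + 1)) = 1 := by
    rw [qInt_congr (g := fun x => k⁻¹ * (exp (-((q ^ m) ^ a * |x| ^ a)) * x ^ (2 * v + 1)))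
      fun n => by ring, qInt_const_mul, qInt_exp_neg_scaled_rpow v a hq0 m, inv_mul_cancel₀ hk.ne']
  have hlogψ : ∀ x, φ x * log (ψ x) * x ^ (2 * v + 1)
      = -(q ^ m) ^ a * (|x| ^ a * φ x * x ^ (2 * v + 1)) - log k * (φ x * x ^ (2 * v + 1)) := by
    intro x
    rw [log_div (exp_pos _).ne' hk.ne', log_exp]
    ring
  have hφψ : QIntegrable q fun x => φ x * log (ψ x) * x ^ (2 * v + 1) :=
    ((hMw.const_mul _).sub (hφw.const_mul _)).congr fun n => (hlogψ _).symm
  have hgibbs := qInt_mul_log_sub_le hq0 hq1.le (fun n => (rpow_pos_of_pos (zpow_pos hq0 n) _).le)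
    hφpos (fun n => by positivity) hφw hψw hEw hφψ
  rw [hψ1, hφ1, funext hlogψ, qInt_sub (hMw.const_mul _) (hφw.const_mul _), qInt_const_mul,
    qInt_const_mul, hφ1] at hgibbs
  rw [qEntropy]
  linarith

theorem qEntropy_moment_bound (q v a : ℝ) (hq0 : 0 < q) (hq1 : q < 1) (hv : -1 < v)
    (ha : 0 < a) (φ : ℝ → ℝ) (hφpos : ∀ n : ℤ, 0 < φ (q ^ n))
    (hφ1 : qInt q (fun x => φ x * x ^ (2 * v + 1)) = 1)
    (hφsum : Summable (fun n : ℤ => q ^ n * (φ (q ^ n) * ((q : ℝ) ^ n) ^ (2 * v + 1))))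
    (hM : Summable (fun n : ℤ =>
      q ^ n * (|(q : ℝ) ^ n| ^ a * φ (q ^ n) * ((q : ℝ) ^ n) ^ (2 * v + 1))))
    (hE : Summable (fun n : ℤ =>
      q ^ n * (φ (q ^ n) * Real.log (φ (q ^ n)) * ((q : ℝ) ^ n) ^ (2 * v + 1))))
    (hσ : Summable (fun n : ℤ =>
      q ^ n * (Real.exp (-(|(q : ℝ) ^ n| ^ a)) * ((q : ℝ) ^ n) ^ (2 * v + 1))))
    (c : ℝ) (hc : ∃ m : ℤ, c = q ^ m) :
    -qEntropy q v φ ≤ Real.log (qSigma q v a / c ^ (2 * v + 2)) +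
      c ^ a * qInt q (fun x => |x| ^ a * φ x * x ^ (2 * v + 1)) :=
  qEntropy_moment_bound_general q v a hq0 hq1 φ hφpos hφ1 hφsum hM hE hσ c hc
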